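/- Let f, g, h : Bool × Bool × Bool → Bool be local rules of elementary cellular automata. If f ≤ₖ g with witnessing encoding φ : Bool → Bool^k and g ≤ₗ h with witnessing encoding ψ : Bool → Bool^l, then f ≤_{kl} h, and a witnessing encoding is enc = ψ̄ ∘ φ : Bool → Bool^{kl}, where ψ̄ applies ψ to each entry of a Boolean sequence and concatenates. -/

import Mathlib

/-- The unravelling of a local rule `f`: it maps a sequence `(b₁,…,bₙ)` (for `n ≥ 3`) to
`(f(b₁,b₂,b₃), f(b₂,b₃,b₄), …, f(b_{n-2},b_{n-1},bₙ))` of length `n - 2`. -/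
def unravel {S : Type*} (f : S × S × S → S) : List S → List S
  | a :: b :: c :: rest => f (a, b, c) :: unravel f (b :: c :: rest)
  | _ => []

/-- Entrywise encoding `ē`: replace each entry by its block and concatenate. -/
def ebar {S T : Type*} (e : S → List T) (c : List S) : List T :=
  (c.map e).flatten

/-- `f ≤ₖ g`: the ECA rule `f` is emulated by `g` with supercell size `k`. -/
def Emulates (f g : Bool × Bool × Bool → Bool) (k : ℕ) : Prop :=
  ∃ enc : Bool → List Bool, Function.Injective enc ∧ (∀ b, (enc b).length = k) ∧
    ∀ s₁ s₂ s₃ : Bool,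
      enc (f (s₁, s₂, s₃)) = (unravel g)^[k] (enc s₁ ++ enc s₂ ++ enc s₃)

/-! Unravelling is local: the first `n` entries of `unravel f c` depend only on the first
`n + 2` entries of `c`, and dropping entries of `c` commutes with `unravel f`. Hence `l` steps
of `h` on `ψ̄ (a :: b :: d :: r)` produce `ψ (g (a, b, d))` from the first three blocks
followed by the `l`-step image of `ψ̄ (b :: d :: r)`, i.e. `ψ̄` intertwines one step of `g`
with `l` steps of `h`. Iterating `k` times turns the `k` steps of `g` emulating `f` into
`k * l` steps of `h`. -/

section Unravel

variable {S : Type*} (f : S × S × S → S)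

theorem length_unravel : ∀ c : List S, (unravel f c).length = c.length - 2
  | [] | [_] | [_, _] => rfl
  | _ :: b :: d :: r => by
    simp only [unravel, List.length_cons, length_unravel (b :: d :: r)]
    omega

theorem length_iterate_unravel (j : ℕ) (c : List S) :
    ((unravel f)^[j] c).length = c.length - 2 * j := by
  induction j with
  | zero => rfl
  | succ j ih =>
    rw [Function.iterate_succ_apply', length_unravel, ih]
    omega

theorem unravel_tail : ∀ c : List S, unravel f c.tail = (unravel f c).tail
  | [] | [_] | [_, _] | _ :: _ :: _ :: _ => rfl

theorem unravel_drop (n : ℕ) (c : List S) : unravel f (c.drop n) = (unravel f c).drop n := by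
  induction n with
  | zero => rfl
  | succ n ih => rw [← List.tail_drop, unravel_tail, ih, List.tail_drop]

theorem unravel_take : ∀ (n : ℕ) (c : List S), unravel f (c.take (n + 2)) = (unravel f c).take n
  | _, [] | _, [_] | _, [_, _] => by simp [unravel]
  | 0, _ :: _ :: _ :: _ => rfl
  | n + 1, a :: b :: d :: r => by
    simp only [List.take_succ_cons, unravel, ← unravel_take n (b :: d :: r)]

theorem iterate_unravel_drop (j n : ℕ) (c : List S) :
    (unravel f)^[j] (c.drop n) = ((unravel f)^[j] c).drop n :=
  (Function.Commute.iterate_left (unravel_drop f n) j) c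

theorem iterate_unravel_take (j : ℕ) :
    ∀ (n : ℕ) (c : List S), (unravel f)^[j] (c.take (n + 2 * j)) = ((unravel f)^[j] c).take n := by
  induction j with
  | zero => intro n c; rfl
  | succ j ih =>
    intro n c
    rw [Function.iterate_succ_apply', Function.iterate_succ_apply',
      show n + 2 * (j + 1) = n + 2 + 2 * j by ring, ih, unravel_take]

end Unravel

section Ebar

variable {S T : Type*} {e : S → List T} {l : ℕ}

theorem ebar_cons (e : S → List T) (a : S) (c : List S) : ebar e (a :: c) = e a ++ ebar e c :=
  rfl

theorem ebar_append (e : S → List T) (c d : List S) : ebar e (c ++ d) = ebar e c ++ ebar e d := by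
  simp [ebar]

theorem length_ebar (he : ∀ b, (e b).length = l) (c : List S) :
    (ebar e c).length = c.length * l := by
  simp [ebar, Function.comp_def, he]

theorem ebar_inj (hinj : Function.Injective e) (he : ∀ b, (e b).length = l) :
    ∀ {c d : List S}, c.length = d.length → ebar e c = ebar e d → c = d
  | [], [], _, _ => rfl
  | a :: c, b :: d, hcd, heq => by
    rw [ebar_cons, ebar_cons] at heq
    obtain ⟨hab, hcd'⟩ := List.append_inj heq (by rw [he, he])
    rw [hinj hab, ebar_inj hinj he (Nat.succ.inj hcd) hcd']

theorem semiconj_ebar_unravel {g : S × S × S → S} {h : T × T × T → T}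
    (he : ∀ b, (e b).length = l)
    (hgh : ∀ s₁ s₂ s₃, e (g (s₁, s₂, s₃)) = (unravel h)^[l] (e s₁ ++ e s₂ ++ e s₃)) :
    Function.Semiconj (ebar e) (unravel g) (unravel h)^[l]
  | [] | [_] | [_, _] => by
    refine (List.eq_nil_of_length_eq_zero ?_).symm
    simp only [length_iterate_unravel, length_ebar he, List.length_cons, List.length_nil]
    omega
  | a :: b :: d :: r => by
    set E := ebar e (a :: b :: d :: r)
    have hfirst : E.take (l + 2 * l) = e a ++ e b ++ e d := by
      simp only [E, ebar_cons, ← List.append_assoc]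
      exact List.take_left' (by simp only [List.length_append, he]; ring)
    have hrest : E.drop l = ebar e (b :: d :: r) :=
      List.drop_left' (he a)
    calc ebar e (unravel g (a :: b :: d :: r))
        = e (g (a, b, d)) ++ ebar e (unravel g (b :: d :: r)) := rfl
      _ = (unravel h)^[l] (E.take (l + 2 * l)) ++ (unravel h)^[l] (E.drop l) := by
        rw [hgh, hfirst, hrest, semiconj_ebar_unravel he hgh (b :: d :: r)]
      _ = (unravel h)^[l] E := by
        rw [iterate_unravel_take, iterate_unravel_drop, List.take_append_drop]

end Ebar

/-- transitivity with explicit witness. If `φ` witnesses `f ≤ₖ g` and `ψ`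
witnesses `g ≤ₗ h`, then `enc = ψ̄ ∘ φ` witnesses `f ≤_{kl} h`; in particular `f ≤_{kl} h`. -/
theorem stmt_2 (f g h : Bool × Bool × Bool → Bool) (k l : ℕ)
    (φ : Bool → List Bool)
    (hφ_inj : Function.Injective φ)
    (hφ_len : ∀ b, (φ b).length = k)
    (hφ : ∀ s₁ s₂ s₃ : Bool,
      φ (f (s₁, s₂, s₃)) = (unravel g)^[k] (φ s₁ ++ φ s₂ ++ φ s₃))
    (ψ : Bool → List Bool)
    (hψ_inj : Function.Injective ψ)
    (hψ_len : ∀ b, (ψ b).length = l)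
    (hψ : ∀ s₁ s₂ s₃ : Bool,
      ψ (g (s₁, s₂, s₃)) = (unravel h)^[l] (ψ s₁ ++ ψ s₂ ++ ψ s₃)) :
    Function.Injective (fun b : Bool => ebar ψ (φ b)) ∧
    (∀ b : Bool, (ebar ψ (φ b)).length = k * l) ∧
    (∀ s₁ s₂ s₃ : Bool,
      ebar ψ (φ (f (s₁, s₂, s₃))) =
        (unravel h)^[k * l] (ebar ψ (φ s₁) ++ ebar ψ (φ s₂) ++ ebar ψ (φ s₃))) ∧
    Emulates f h (k * l) := by
  have hlen : ∀ b, (ebar ψ (φ b)).length = k * l := fun b => by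
    rw [length_ebar hψ_len, hφ_len]
  have hinj : Function.Injective (fun b => ebar ψ (φ b)) := fun b₁ b₂ hb =>
    hφ_inj (ebar_inj hψ_inj hψ_len (by rw [hφ_len, hφ_len]) hb)
  have hstep : ∀ s₁ s₂ s₃ : Bool, ebar ψ (φ (f (s₁, s₂, s₃))) =
      (unravel h)^[k * l] (ebar ψ (φ s₁) ++ ebar ψ (φ s₂) ++ ebar ψ (φ s₃)) := by
    intro s₁ s₂ s₃
    rw [hφ, (semiconj_ebar_unravel hψ_len hψ).iterate_right k, ← Function.iterate_mul,
      mul_comm, ebar_append, ebar_append]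
  exact ⟨hinj, hlen, hstep, _, hinj, hlen, hstep⟩
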